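/- arXiv:2404.12661 — 3 statements merged into one kernel-verified Lean document; each statement's English description precedes it below -/
import Mathlib

section
/- The cross ratio ⟨x,z⟩⟨y,t⟩ / (⟨x,t⟩⟨y,z⟩) of four distinct isotropic lines in a regular 3-dimensional quadratic space is well-defined (independent of the choice of representative vectors, the denominators being nonzero) and invariant under any orthogonal transformation of the space. -/
open Module Submodule

namespace LinearMap.BilinForm

variable {K V : Type*} [Field K] [AddCommGroup V] [Module K V] {B : LinearMap.BilinForm K V}

theorem span_pair_le_orthogonal (hB : B.IsRefl) {u v : V} (huu : B u u = 0) (hvv : B v v = 0)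
    (huv : B u v = 0) : span K {u, v} ≤ B.orthogonal (span K {u, v}) := by
  have hvu : B v u = 0 := hB u v huv
  intro w hw
  rw [mem_orthogonal_iff]
  intro w' hw'
  obtain ⟨a, b, rfl⟩ := mem_span_pair.mp hw
  obtain ⟨c, d, rfl⟩ := mem_span_pair.mp hw'
  simp [huu, hvv, huv, hvu]

variable [FiniteDimensional K V]

theorem two_mul_finrank_le_of_le_orthogonal (hB : B.Nondegenerate) {W : Submodule K V}
    (hW : W ≤ B.orthogonal W) : 2 * finrank K W ≤ finrank K V := by
  have hle := Submodule.finrank_mono hW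
  rw [finrank_orthogonal hB] at hle
  have := W.finrank_le
  omega

/-- Below dimension 4 a nondegenerate reflexive form has no totally isotropic plane, so two
independent isotropic vectors are never orthogonal. -/
theorem apply_ne_zero_of_isotropic (hB : B.Nondegenerate) (hB' : B.IsRefl)
    (hV : finrank K V < 4) {u v : V} (hu : u ≠ 0) (huu : B u u = 0) (hvv : B v v = 0)
    (huv : ¬∃ c : K, v = c • u) : B u v ≠ 0 := by
  intro h
  have hind : LinearIndependent K ![u, v] :=
    (LinearIndependent.pair_iff' hu).mpr fun c hc => huv ⟨c, hc.symm⟩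
  have hplane : finrank K (span K {u, v}) = 2 := by
    rw [show ({u, v} : Set V) = Set.range ![u, v] by simp [Set.pair_comm]]
    simpa using finrank_span_eq_card hind
  have := two_mul_finrank_le_of_le_orthogonal hB (span_pair_le_orthogonal hB' huu hvv h)
  omega

end LinearMap.BilinForm

theorem stmt_12_general {K : Type*} [Field K]
    {E : Type*} [AddCommGroup E] [Module K E] [FiniteDimensional K E]
    (hdim : Module.finrank K E = 3)
    (B : LinearMap.BilinForm K E) (hsymm : B.IsSymm) (hnd : B.Nondegenerate)
    (x y z t : E) (hx : x ≠ 0) (hy : y ≠ 0)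
    (hxx : B x x = 0) (hyy : B y y = 0) (hzz : B z z = 0) (htt : B t t = 0)
    (hxt : ¬∃ c : K, t = c • x) (hyz : ¬∃ c : K, z = c • y) :
    B x t * B y z ≠ 0 ∧
      (∀ a b c d : K, a ≠ 0 → b ≠ 0 → c ≠ 0 → d ≠ 0 →
        B (a • x) (c • z) * B (b • y) (d • t)
            / (B (a • x) (d • t) * B (b • y) (c • z))
          = B x z * B y t / (B x t * B y z)) ∧
      (∀ f : E ≃ₗ[K] E, (∀ v w : E, B (f v) (f w) = B v w) →
        B (f x) (f z) * B (f y) (f t) / (B (f x) (f t) * B (f y) (f z))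
          = B x z * B y t / (B x t * B y z)) := by
  have hdim_lt : finrank K E < 4 := by omega
  have hBxt :=
    LinearMap.BilinForm.apply_ne_zero_of_isotropic hnd hsymm.isRefl hdim_lt hx hxx htt hxt
  have hByz :=
    LinearMap.BilinForm.apply_ne_zero_of_isotropic hnd hsymm.isRefl hdim_lt hy hyy hzz hyz
  refine ⟨mul_ne_zero hBxt hByz, ?_, fun f hf => by simp only [hf]⟩
  intro a b c d ha hb hc hd
  simp only [map_smul, LinearMap.smul_apply, smul_eq_mul]
  field_simp

/-- The cross ratio `⟨x,z⟩⟨y,t⟩ / (⟨x,t⟩⟨y,z⟩)` of four distinct isotropic lines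
in a regular 3-dimensional quadratic space is well-defined (denominators
nonzero, independent of representatives) and invariant under any orthogonal
transformation. -/
theorem stmt_12 {K : Type*} [Field K] (h2 : (2 : K) ≠ 0)
    {E : Type*} [AddCommGroup E] [Module K E] [FiniteDimensional K E]
    (hdim : Module.finrank K E = 3)
    (B : LinearMap.BilinForm K E) (hsymm : B.IsSymm) (hnd : B.Nondegenerate)
    (x y z t : E) (hx : x ≠ 0) (hy : y ≠ 0) (hz : z ≠ 0) (ht : t ≠ 0)
    (hxx : B x x = 0) (hyy : B y y = 0) (hzz : B z z = 0) (htt : B t t = 0)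
    (hxy : ¬∃ c : K, y = c • x) (hxz : ¬∃ c : K, z = c • x)
    (hxt : ¬∃ c : K, t = c • x) (hyz : ¬∃ c : K, z = c • y)
    (hyt : ¬∃ c : K, t = c • y) (hzt : ¬∃ c : K, t = c • z) :
    B x t * B y z ≠ 0 ∧
      (∀ a b c d : K, a ≠ 0 → b ≠ 0 → c ≠ 0 → d ≠ 0 →
        B (a • x) (c • z) * B (b • y) (d • t)
            / (B (a • x) (d • t) * B (b • y) (c • z))
          = B x z * B y t / (B x t * B y z)) ∧
      (∀ f : E ≃ₗ[K] E, (∀ v w : E, B (f v) (f w) = B v w) →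
        B (f x) (f z) * B (f y) (f t) / (B (f x) (f t) * B (f y) (f z))
          = B x z * B y t / (B x t * B y z)) :=
  stmt_12_general hdim B hsymm hnd x y z t hx hy hxx hyy hzz htt hxt hyz
end

section
/- Any bijection of the projective line ℙ¹(K) over a field K of characteristic ≠ 2 preserving the square of the classical cross ratio of all quadruples of distinct points is a projective transformation (an element of PGL(2,K)). -/
/-!
Three distinct points of `ℙ¹(K)` can be moved to `∞, 0, 1` by a projective transformation `g`,
and projective transformations preserve the cross ratio. Hence `g⁻¹ ∘ f` fixes `∞, 0, 1` and
still preserves the squared cross ratio. If it sends a point `x ∉ {∞, 0, 1}` to `y`, comparing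
`[x, 1; 0, ∞] = x` and `[x, 0; 1, ∞] = 1 - x` with their images gives `y² = x²` and
`(1 - y)² = (1 - x)²`, so `2 (y - x) = 0` and `y = x` because the characteristic is not `2`.
-/

/-- The determinant pairing of two vectors of `K²`; the classical cross ratio
of four points of `ℙ¹(K)` with representatives `x, y, z, t` is
`det(x,z)det(y,t) / (det(x,t)det(y,z))` (this handles `∞` uniformly). -/
def det2 {K : Type*} [Field K] (x y : Fin 2 → K) : K :=
  x 0 * y 1 - x 1 * y 0

lemma eq_of_sq_eq_sq_of_one_sub_sq_eq {R : Type*} [CommRing R] [NoZeroDivisors R]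
    (h2 : (2 : R) ≠ 0) {x y : R} (h : y ^ 2 = x ^ 2) (h' : (1 - y) ^ 2 = (1 - x) ^ 2) : y = x := by
  have : 2 * (y - x) = 0 := by linear_combination h - h'
  exact sub_eq_zero.mp ((mul_eq_zero.mp this).resolve_left h2)

section Det2

open Projectivization Matrix

variable {K : Type*} [Field K]

@[simp]
lemma det2_self (x : Fin 2 → K) : det2 x x = 0 := by
  simp only [det2, mul_comm, sub_self]

lemma det2_swap (x y : Fin 2 → K) : det2 y x = -det2 x y := by
  simp only [det2]; ring

@[simp]
lemma det2_smul_left (a : K) (x y : Fin 2 → K) : det2 (a • x) y = a * det2 x y := by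
  simp only [det2, Pi.smul_apply, smul_eq_mul]; ring

@[simp]
lemma det2_smul_right (a : K) (x y : Fin 2 → K) : det2 x (a • y) = a * det2 x y := by
  simp only [det2, Pi.smul_apply, smul_eq_mul]; ring

lemma det2_mulVec (A : Matrix (Fin 2) (Fin 2) K) (x y : Fin 2 → K) :
    det2 (A *ᵥ x) (A *ᵥ y) = A.det * det2 x y := by
  simp only [det2, mulVec_fin_two, det_fin_two, Matrix.cons_val_zero, Matrix.cons_val_one]; ring

lemma det2_map (g : (Fin 2 → K) →ₗ[K] (Fin 2 → K)) (x y : Fin 2 → K) :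
    det2 (g x) (g y) = LinearMap.det g * det2 x y := by
  rw [← LinearMap.det_toMatrix', ← det2_mulVec, LinearMap.toMatrix'_mulVec,
    LinearMap.toMatrix'_mulVec]

lemma det2_smul_eq (u v w : Fin 2 → K) : det2 u v • w = det2 w v • u + det2 u w • v := by
  ext i; fin_cases i <;> simp [det2] <;> ring

lemma mk_eq_mk_iff_det2_eq_zero {x y : Fin 2 → K} (hx : x ≠ 0) (hy : y ≠ 0) :
    mk K x hx = mk K y hy ↔ det2 x y = 0 := by
  rw [mk_eq_mk_iff']
  refine ⟨by rintro ⟨a, rfl⟩; rw [det2_smul_left, det2_self, mul_zero], fun h => ?_⟩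
  by_cases hy0 : y 0 = 0
  · have hy1 : y 1 ≠ 0 := fun hy1 => hy (by ext i; fin_cases i <;> assumption)
    refine ⟨x 1 / y 1, ?_⟩
    ext i; fin_cases i
    · simp only [det2, hy0, mul_zero, sub_zero] at h
      simp [hy0, mul_eq_zero.mp h |>.resolve_right hy1]
    · simp [hy1]
  · refine ⟨x 0 / y 0, ?_⟩
    ext i; fin_cases i
    · simp [hy0]
    · simp only [det2] at h
      show x 0 / y 0 * y 1 = x 1
      field_simp
      linear_combination h

end Det2

namespace ProjectiveLine

open Projectivization Matrix
open scoped LinearAlgebra.Projectivization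

variable {K : Type*} [Field K]

local notation "ℙ¹" => ℙ K (Fin 2 → K)

noncomputable def crossRatio (p q r s : ℙ¹) : K :=
  det2 p.rep r.rep * det2 q.rep s.rep / (det2 p.rep s.rep * det2 q.rep r.rep)

lemma crossRatio_mk {x y z t : Fin 2 → K} (hx : x ≠ 0) (hy : y ≠ 0) (hz : z ≠ 0) (ht : t ≠ 0) :
    crossRatio (mk K x hx) (mk K y hy) (mk K z hz) (mk K t ht)
      = det2 x z * det2 y t / (det2 x t * det2 y z) := by
  obtain ⟨a, ha⟩ := exists_smul_eq_mk_rep K x hx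
  obtain ⟨b, hb⟩ := exists_smul_eq_mk_rep K y hy
  obtain ⟨c, hc⟩ := exists_smul_eq_mk_rep K z hz
  obtain ⟨d, hd⟩ := exists_smul_eq_mk_rep K t ht
  simp only [crossRatio, ← ha, ← hb, ← hc, ← hd, Units.smul_def, det2_smul_left, det2_smul_right]
  field_simp

lemma crossRatio_smul (g : (Fin 2 → K) ≃ₗ[K] (Fin 2 → K)) (p q r s : ℙ¹) :
    crossRatio (g • p) (g • q) (g • r) (g • s) = crossRatio p q r s := by
  have hg : LinearMap.det (g : (Fin 2 → K) →ₗ[K] (Fin 2 → K)) ≠ 0 := g.isUnit_det'.ne_zero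
  rw [← p.mk_rep, ← q.mk_rep, ← r.mk_rep, ← s.mk_rep]
  simp only [smul_mk, crossRatio_mk, LinearEquiv.smul_def, ← LinearEquiv.coe_coe, det2_map]
  field_simp

def infty : ℙ¹ := mk K ![1, 0] (by simp)

def affine (x : K) : ℙ¹ := mk K ![x, 1] (by simp)

lemma affine_ne_infty (x : K) : affine x ≠ infty := by
  simp [affine, infty, mk_eq_mk_iff_det2_eq_zero, det2]

lemma affine_inj {x y : K} : affine x = affine y ↔ x = y := by
  simp [affine, mk_eq_mk_iff_det2_eq_zero, det2, sub_eq_zero]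

lemma eq_infty_or_exists_eq_affine (p : ℙ¹) : p = infty ∨ ∃ x, p = affine x := by
  induction p with | h v hv =>
  by_cases hv1 : v 1 = 0
  · left
    simp [infty, mk_eq_mk_iff_det2_eq_zero, det2, hv1]
  · right
    refine ⟨v 0 / v 1, ?_⟩
    simp [affine, mk_eq_mk_iff_det2_eq_zero, det2, mul_div_cancel₀ _ hv1]

lemma crossRatio_affine_one_zero_infty (x : K) :
    crossRatio (affine x) (affine 1) (affine 0) infty = x := by
  simp [affine, infty, crossRatio_mk, det2]

lemma crossRatio_affine_zero_one_infty (x : K) :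
    crossRatio (affine x) (affine 0) (affine 1) infty = 1 - x := by
  simp [affine, infty, crossRatio_mk, det2]

lemma exists_linearEquiv_apply_eq {u v : Fin 2 → K} (h : det2 u v ≠ 0) :
    ∃ g : (Fin 2 → K) ≃ₗ[K] (Fin 2 → K), ∀ z, g z = z 0 • u + z 1 • v := by
  let A : Matrix (Fin 2) (Fin 2) K := !![u 0, v 0; u 1, v 1]
  have hA : IsUnit A.det := by
    simpa [A, det_fin_two_of, det2, mul_comm] using h
  refine ⟨A.toLinearEquiv' (A.invertibleOfIsUnitDet hA), fun z => ?_⟩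
  change A *ᵥ z = _
  rw [mulVec_fin_two]
  ext i
  fin_cases i <;> simp [A] <;> ring

lemma exists_smul_eq_of_pairwise_ne {p q s : ℙ¹} (hpq : p ≠ q) (hps : p ≠ s) (hqs : q ≠ s) :
    ∃ g : (Fin 2 → K) ≃ₗ[K] (Fin 2 → K), g • infty = p ∧ g • affine 0 = q ∧ g • affine 1 = s := by
  induction p with | h u hu =>
  induction q with | h v hv =>
  induction s with | h w hw =>
  rw [Ne, mk_eq_mk_iff_det2_eq_zero] at hpq hps hqs
  -- Cramer's rule rescales `u` and `v` so that their sum represents the third point.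
  obtain ⟨g, hg⟩ := exists_linearEquiv_apply_eq (u := det2 w v • u) (v := det2 u w • v) <| by
    simp only [det2_smul_left, det2_smul_right]
    exact mul_ne_zero hps (mul_ne_zero (by rwa [det2_swap, neg_ne_zero]) hpq)
  refine ⟨g, ?_, ?_, ?_⟩ <;>
  simp [infty, affine, smul_mk, LinearEquiv.smul_def, mk_eq_mk_iff_det2_eq_zero, hg, ← det2_smul_eq]

def PreservesCrossRatioSq (f : ℙ¹ → ℙ¹) : Prop :=
  ∀ p q r s, p ≠ q → p ≠ r → p ≠ s → q ≠ r → q ≠ s → r ≠ s →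
    crossRatio (f p) (f q) (f r) (f s) ^ 2 = crossRatio p q r s ^ 2

lemma PreservesCrossRatioSq.smul_comp {f : ℙ¹ → ℙ¹} (hf : PreservesCrossRatioSq f)
    (g : (Fin 2 → K) ≃ₗ[K] (Fin 2 → K)) : PreservesCrossRatioSq (g • f ·) :=
  fun p q r s hpq hpr hps hqr hqs hrs => by
    rw [crossRatio_smul]; exact hf p q r s hpq hpr hps hqr hqs hrs

lemma PreservesCrossRatioSq.eq_self (h2 : (2 : K) ≠ 0) {f : ℙ¹ → ℙ¹}
    (hf : PreservesCrossRatioSq f) (hinj : Function.Injective f) (hinfty : f infty = infty)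
    (h0 : f (affine 0) = affine 0) (h1 : f (affine 1) = affine 1) (p : ℙ¹) : f p = p := by
  obtain rfl | ⟨x, rfl⟩ := eq_infty_or_exists_eq_affine p
  · exact hinfty
  obtain rfl | hx0 := eq_or_ne x 0
  · exact h0
  obtain rfl | hx1 := eq_or_ne x 1
  · exact h1
  obtain ⟨y, hy⟩ : ∃ y, f (affine x) = affine y :=
    (eq_infty_or_exists_eq_affine _).resolve_left
      fun h => affine_ne_infty x (hinj (h.trans hinfty.symm))
  have h10 : affine (1 : K) ≠ affine 0 := affine_inj.not.mpr one_ne_zero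
  have hx0' : affine x ≠ affine 0 := affine_inj.not.mpr hx0
  have hx1' : affine x ≠ affine 1 := affine_inj.not.mpr hx1
  have hsq : y ^ 2 = x ^ 2 := by
    simpa only [hy, h1, h0, hinfty, crossRatio_affine_one_zero_infty] using
      hf _ _ _ _ hx1' hx0' (affine_ne_infty x) h10 (affine_ne_infty 1) (affine_ne_infty 0)
  have hsq' : (1 - y) ^ 2 = (1 - x) ^ 2 := by
    simpa only [hy, h1, h0, hinfty, crossRatio_affine_zero_one_infty] using
      hf _ _ _ _ hx0' hx1' (affine_ne_infty x) h10.symm (affine_ne_infty 0) (affine_ne_infty 1)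
  rw [hy, eq_of_sq_eq_sq_of_one_sub_sq_eq h2 hsq hsq']

lemma PreservesCrossRatioSq.exists_linearEquiv (h2 : (2 : K) ≠ 0) {f : ℙ¹ → ℙ¹}
    (hf : PreservesCrossRatioSq f) (hinj : Function.Injective f) :
    ∃ g : (Fin 2 → K) ≃ₗ[K] (Fin 2 → K), ∀ p, f p = g • p := by
  have h0 : affine (0 : K) ≠ infty := affine_ne_infty 0
  have h1 : affine (1 : K) ≠ infty := affine_ne_infty 1
  have h10 : affine (1 : K) ≠ affine 0 := affine_inj.not.mpr one_ne_zero
  obtain ⟨g, hgInfty, hg0, hg1⟩ :=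
    exists_smul_eq_of_pairwise_ne (hinj.ne h0.symm) (hinj.ne h1.symm) (hinj.ne h10.symm)
  have hid := (hf.smul_comp g⁻¹).eq_self h2 ((MulAction.injective g⁻¹).comp hinj)
    (by simp [← hgInfty]) (by simp [← hg0]) (by simp [← hg1])
  exact ⟨g, fun p => inv_smul_eq_iff.mp (hid p)⟩

end ProjectiveLine

/-- Any bijection of the projective line `ℙ¹(K)` (char `K ≠ 2`) preserving the
square of the classical cross ratio of all distinct quadruples is a projective
transformation, i.e. induced by an invertible linear map of `K²`. -/
theorem stmt_15 {K : Type*} [Field K] (h2 : (2 : K) ≠ 0)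
    (f : Projectivization K (Fin 2 → K) ≃ Projectivization K (Fin 2 → K))
    (hcr : ∀ (x y z t x' y' z' t' : Fin 2 → K)
      (hx : x ≠ 0) (hy : y ≠ 0) (hz : z ≠ 0) (ht : t ≠ 0)
      (hx' : x' ≠ 0) (hy' : y' ≠ 0) (hz' : z' ≠ 0) (ht' : t' ≠ 0),
      Projectivization.mk K x hx ≠ Projectivization.mk K y hy →
      Projectivization.mk K x hx ≠ Projectivization.mk K z hz →
      Projectivization.mk K x hx ≠ Projectivization.mk K t ht →
      Projectivization.mk K y hy ≠ Projectivization.mk K z hz →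
      Projectivization.mk K y hy ≠ Projectivization.mk K t ht →
      Projectivization.mk K z hz ≠ Projectivization.mk K t ht →
      f (Projectivization.mk K x hx) = Projectivization.mk K x' hx' →
      f (Projectivization.mk K y hy) = Projectivization.mk K y' hy' →
      f (Projectivization.mk K z hz) = Projectivization.mk K z' hz' →
      f (Projectivization.mk K t ht) = Projectivization.mk K t' ht' →
      (det2 x' z' * det2 y' t' / (det2 x' t' * det2 y' z')) ^ 2
        = (det2 x z * det2 y t / (det2 x t * det2 y z)) ^ 2) :
    ∃ g : (Fin 2 → K) ≃ₗ[K] (Fin 2 → K),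
      ∀ (v : Fin 2 → K) (hv : v ≠ 0),
        f (Projectivization.mk K v hv)
          = Projectivization.mk K (g v) (by
              simpa using (LinearEquiv.map_ne_zero_iff g).mpr hv) := by
  have hf : ProjectiveLine.PreservesCrossRatioSq f := fun p q r s => by
    simpa only [Projectivization.mk_rep, forall_const, ProjectiveLine.crossRatio] using
      hcr p.rep q.rep r.rep s.rep (f p).rep (f q).rep (f r).rep (f s).rep
        p.rep_nonzero q.rep_nonzero r.rep_nonzero s.rep_nonzero
        (f p).rep_nonzero (f q).rep_nonzero (f r).rep_nonzero (f s).rep_nonzero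
  obtain ⟨g, hg⟩ := hf.exists_linearEquiv h2 f.injective
  exact ⟨g, fun v hv => hg _⟩
end

section
/- Let p be a nonisotropic cycle and u, v ∈ K distinct elements such that the reflection σ_p maps the isotropic line of qᵤ = X²−2uX+u² to the isotropic line of q_v = X²−2vX+v². Then the cycle (X−u)(X−v) is orthogonal to p under the cycle pairing: ⟨p, X² − (u+v)X + uv⟩ = 0. -/
def cyclePair {K : Type*} [Field K] (p q : K × K × K) : K :=
  p.2.1 * q.2.1 - 2 * p.1 * q.2.2 - 2 * q.1 * p.2.2

/-!
Write `q_w = (X - w)²` and `r = (X - u)(X - v)`. Pairing with `q_w` evaluates a cycle at `w`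
(up to the factor `-2`), so `r` is orthogonal to both `q_u` and `q_v`. The hypothesis says
`t • p = q_u - e • q_v` for some scalar `t`, and `t ≠ 0` because `q_u` is not a multiple of `q_v`
when `u ≠ v`; hence `p` lies in the span of `q_u, q_v` and is orthogonal to `r`.
-/

section

variable {K : Type*} [Field K]

def isotropicCycle (w : K) : K × K × K := (1, -2 * w, w ^ 2)

def evalCycle (r : K × K × K) (w : K) : K := r.1 * w ^ 2 + r.2.1 * w + r.2.2

lemma cyclePair_smul_left (t : K) (p q : K × K × K) :
    cyclePair (t • p) q = t * cyclePair p q := by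
  simp only [cyclePair, Prod.smul_fst, Prod.smul_snd, smul_eq_mul]
  ring

lemma cyclePair_sub_left (p p' q : K × K × K) :
    cyclePair (p - p') q = cyclePair p q - cyclePair p' q := by
  simp only [cyclePair, Prod.fst_sub, Prod.snd_sub]
  ring

lemma cyclePair_isotropicCycle_left (w : K) (r : K × K × K) :
    cyclePair (isotropicCycle w) r = -2 * evalCycle r w := by
  simp only [cyclePair, isotropicCycle, evalCycle]
  ring

lemma evalCycle_left_root (u v : K) : evalCycle (1, -(u + v), u * v) u = 0 := by
  simp only [evalCycle]
  ring

lemma evalCycle_right_root (u v : K) : evalCycle (1, -(u + v), u * v) v = 0 := by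
  simp only [evalCycle]
  ring

lemma eq_of_isotropicCycle_eq_smul {u v e : K} (h : isotropicCycle u = e • isotropicCycle v) :
    u = v := by
  simp only [isotropicCycle, Prod.smul_mk, smul_eq_mul, Prod.mk.injEq] at h
  obtain ⟨he, hlin, hsq⟩ := h
  rw [mul_one] at he
  subst he
  -- No division by `2`: `(u - v)² = (u² - v²) + v (2v - 2u)`.
  have hsq' : (u - v) ^ 2 = 0 := by linear_combination hsq + v * hlin
  exact sub_eq_zero.mp (pow_eq_zero_iff two_ne_zero |>.mp hsq')

lemma cyclePair_eq_zero_of_isotropicCycle_sub_smul_eq {p : K × K × K} {u v t e : K}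
    (huv : u ≠ v) (h : isotropicCycle u - t • p = e • isotropicCycle v) :
    cyclePair p (1, -(u + v), u * v) = 0 := by
  have ht : t ≠ 0 := by
    rintro rfl
    rw [zero_smul, sub_zero] at h
    exact huv (eq_of_isotropicCycle_eq_smul h)
  have hp : t • p = isotropicCycle u - e • isotropicCycle v := by
    rw [← h, sub_sub_cancel]
  have hpair : t * cyclePair p (1, -(u + v), u * v) = 0 := by
    rw [← cyclePair_smul_left, hp, cyclePair_sub_left, cyclePair_smul_left,
      cyclePair_isotropicCycle_left, cyclePair_isotropicCycle_left, evalCycle_left_root,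
      evalCycle_right_root]
    ring
  exact (mul_eq_zero.mp hpair).resolve_left ht

end

theorem stmt_18_general {K : Type*} [Field K]
    (p : K × K × K) (u v : K) (huv : u ≠ v)
    (hrefl : ∃ e : K, e ≠ 0 ∧
      ((1 : K), -2 * u, u ^ 2)
          - (2 * cyclePair ((1 : K), -2 * u, u ^ 2) p / cyclePair p p) • p
        = e • ((1 : K), -2 * v, v ^ 2)) :
    cyclePair p ((1 : K), -(u + v), u * v) = 0 := by
  obtain ⟨e, -, h⟩ := hrefl
  exact cyclePair_eq_zero_of_isotropicCycle_sub_smul_eq huv h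

/-- If the reflection in a nonisotropic cycle `p` maps the isotropic line of
`qᵤ` to the isotropic line of `q_v` (for distinct `u, v`), then the cycle
`(X − u)(X − v)` is orthogonal to `p`. -/
theorem stmt_18 {K : Type*} [Field K] (h2 : (2 : K) ≠ 0)
    (p : K × K × K) (hp : cyclePair p p ≠ 0) (u v : K) (huv : u ≠ v)
    (hrefl : ∃ e : K, e ≠ 0 ∧
      ((1 : K), -2 * u, u ^ 2)
          - (2 * cyclePair ((1 : K), -2 * u, u ^ 2) p / cyclePair p p) • p
        = e • ((1 : K), -2 * v, v ^ 2)) :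
    cyclePair p ((1 : K), -(u + v), u * v) = 0 :=
  stmt_18_general p u v huv hrefl
end
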